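/- If every left 3-Engel element of every group lies in the Hirsch–Plotkin (locally nilpotent) radical of that group, then every finitely generated sandwich group is nilpotent; conversely, if every finitely generated sandwich group is nilpotent, then every left 3-Engel element of any group lies in the locally nilpotent radical. -/

import Mathlib

section Defs

variable {G : Type*} [Group G]

/-- Group commutator `[x,y] = x⁻¹ y⁻¹ x y`. -/
def bra (x y : G) : G := x⁻¹ * y⁻¹ * x * y

/-- Conjugation `g^h = h⁻¹ g h`. -/
def cnj (g h : G) : G := h⁻¹ * g * h

/-- A subgroup is nilpotent of class at most `n`. -/
def NilClassLe (H : Subgroup G) (n : ℕ) : Prop :=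
  upperCentralSeries H n = ⊤

/-- A subgroup is locally nilpotent. -/
def LocallyNilpotentSubgroup (N : Subgroup G) : Prop :=
  ∀ S : Set G, S.Finite → S ⊆ N → Group.IsNilpotent (Subgroup.closure S)

/-- `a` is a left 3-Engel element of `G`. -/
def LeftThreeEngel (a : G) : Prop :=
  ∀ x : G, bra (bra (bra x a) a) a = 1

/-- `a` lies in the Hirsch–Plotkin (locally nilpotent) radical of `G`: it belongs to
some locally nilpotent normal subgroup. -/
def InHPRadical (a : G) : Prop :=
  ∃ N : Subgroup G, N.Normal ∧ LocallyNilpotentSubgroup N ∧ a ∈ N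

/-- `X` is a sandwich set in `G`. -/
def SandwichSet (X : Set G) : Prop :=
  ∀ a ∈ X, ∀ b ∈ X, ∀ g ∈ Subgroup.closure X,
    NilClassLe (Subgroup.closure {a, cnj b g}) 2

end Defs

/-!
Any two conjugates of a left 3-Engel element `a` generate a group of class at most 2, so a finite
set of conjugates of `a` is a sandwich set in the subgroup it generates. If finitely generated
sandwich groups are nilpotent, every finitely generated subgroup of `⟨a⟩^G` is therefore
nilpotent, i.e. `⟨a⟩^G` is a locally nilpotent normal subgroup containing `a`.

Conversely, let a finite sandwich set `X` generate `G`. In the wreath product `G^X ⋊ Sym(X)` the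
element `b = (x)_{x ∈ X}` is left 3-Engel, since `[z, b, b, b]` is computed coordinatewise inside
groups `⟨x, y^g⟩` of class at most 2. So `b` lies in a locally nilpotent normal subgroup; the
finitely many conjugates of `b` by permutations then generate a nilpotent group, which a
coordinate projection maps onto `⟨X⟩ = G`.
-/

open Subgroup SemidirectProduct
open scoped commutatorElement

section Commutators

variable {G H : Type*} [Group G] [Group H]

theorem bra_eq_one_iff {x y : G} : bra x y = 1 ↔ Commute x y := by
  rw [show bra x y = (y * x)⁻¹ * (x * y) by simp [bra]; group, inv_mul_eq_one, eq_comm]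
  rfl

theorem map_bra {F : Type*} [FunLike F G H] [MonoidHomClass F G H] (f : F) (x y : G) :
    f (bra x y) = bra (f x) (f y) := by
  simp [bra]

theorem map_cnj {F : Type*} [FunLike F G H] [MonoidHomClass F G H] (f : F) (x y : G) :
    f (cnj x y) = cnj (f x) (f y) := by
  simp [cnj]

theorem bra_eq_inv_cnj_mul (x y : G) : bra x y = (cnj y x)⁻¹ * y := by
  simp [bra, cnj]; group

theorem bra_mul_right (x y z : G) : bra x (y * z) = bra x z * cnj (bra x y) z := by
  simp [bra, cnj]; group

theorem bra_inv_right (x y : G) : bra x y⁻¹ = cnj (bra x y)⁻¹ y⁻¹ := by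
  simp [bra, cnj]; group

theorem inv_bra (x y : G) : (bra x y)⁻¹ = bra y x := by
  simp [bra]; group

theorem upperCentralSeries_two_eq_top_iff :
    Subgroup.upperCentralSeries G 2 = ⊤ ↔ ∀ u v w : G, bra (bra u v) w = 1 := by
  have key : ∀ x y : G, ⁅x, y⁆ = bra x⁻¹ y⁻¹ := by simp [bra, commutatorElement_def]
  simp_rw [eq_top_iff', Subgroup.mem_upperCentralSeries_succ_iff (n := 1),
    Subgroup.upperCentralSeries_one, mem_center_iff, key, bra_eq_one_iff]
  constructor
  · intro h u v w
    have := h u⁻¹ v⁻¹ w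
    rw [inv_inv, inv_inv] at this
    exact this.symm
  · intro h x y w
    exact (h _ _ w).symm

theorem nilClassLe_two_iff (K : Subgroup G) :
    NilClassLe K 2 ↔ ∀ u ∈ K, ∀ v ∈ K, ∀ w ∈ K, bra (bra u v) w = 1 := by
  refine upperCentralSeries_two_eq_top_iff.trans ?_
  simp_rw [Subtype.forall, ← K.subtype_injective.eq_iff, map_bra, map_one, coe_subtype]

theorem NilClassLe.of_map_injective {f : G →* H} (hf : Function.Injective f) {K : Subgroup G}
    (h : NilClassLe (K.map f) 2) : NilClassLe K 2 := by
  rw [nilClassLe_two_iff] at h ⊢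
  intro u hu v hv w hw
  apply hf
  rw [map_bra, map_bra, map_one]
  exact h _ (mem_map_of_mem f hu) _ (mem_map_of_mem f hv) _ (mem_map_of_mem f hw)

theorem bra_mem_of_forall_mem_closure {S : Set G} {N : Subgroup G}
    (hN : ∀ c ∈ N, ∀ g ∈ closure S, cnj c g ∈ N) {x v : G} (hx : ∀ y ∈ S, bra x y ∈ N)
    (hv : v ∈ closure S) : bra x v ∈ N := by
  induction hv using closure_induction with
  | mem y hy => exact hx y hy
  | one => simp [bra]
  | mul y z hy hz ihy ihz =>
    rw [bra_mul_right]
    exact mul_mem ihz (hN _ ihy z hz)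
  | inv y hy ihy =>
    rw [bra_inv_right]
    exact hN _ (inv_mem ihy) _ (inv_mem hy)

theorem cnj_mem_centralizer {K : Subgroup G} {c g : G} (hc : c ∈ centralizer (K : Set G))
    (hg : g ∈ K) : cnj c g ∈ centralizer (K : Set G) := by
  rw [mem_centralizer_iff] at hc ⊢
  intro h hh
  have := hc (g * h * g⁻¹) (mul_mem (mul_mem hg hh) (inv_mem hg))
  simp only [cnj]
  calc h * (g⁻¹ * c * g) = g⁻¹ * ((g * h * g⁻¹) * c) * g := by group
  _ = g⁻¹ * (c * (g * h * g⁻¹)) * g := by rw [this]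
  _ = g⁻¹ * c * g * h := by group

theorem nilClassLe_closure_two {S : Set G}
    (hS : ∀ x ∈ S, ∀ y ∈ S, bra x y ∈ centralizer S) : NilClassLe (closure S) 2 := by
  rw [← centralizer_closure] at hS
  have hN := fun c (hc : c ∈ centralizer (closure S : Set G)) g (hg : g ∈ closure S) =>
    cnj_mem_centralizer hc hg
  have hgen : ∀ x ∈ S, ∀ v ∈ closure S, bra x v ∈ centralizer (closure S : Set G) :=
    fun x hx v hv => bra_mem_of_forall_mem_closure hN (hS x hx) hv
  have hall : ∀ u ∈ closure S, ∀ v ∈ closure S, bra u v ∈ centralizer (closure S : Set G) := by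
    intro u hu v hv
    rw [← inv_bra]
    refine inv_mem (bra_mem_of_forall_mem_closure hN (fun x hx => ?_) hu)
    rw [← inv_bra]
    exact inv_mem (hgen x hx v hv)
  rw [nilClassLe_two_iff]
  intro u hu v hv w hw
  exact bra_eq_one_iff.mpr (mem_centralizer_iff.mp (hall u hu v hv) w hw).symm

end Commutators

section LeftThreeEngel

variable {G H : Type*} [Group G] [Group H] {a : G}

theorem LeftThreeEngel.map_mulEquiv (e : G ≃* H) (ha : LeftThreeEngel a) :
    LeftThreeEngel (e a) := by
  intro x
  rw [← e.apply_symm_apply x, ← map_bra, ← map_bra, ← map_bra, ha, map_one]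

theorem LeftThreeEngel.of_isConj {b : G} (ha : LeftThreeEngel a) (hab : IsConj a b) :
    LeftThreeEngel b := by
  obtain ⟨c, rfl⟩ := isConj_iff.mp hab
  exact ha.map_mulEquiv (MulAut.conj c)

-- Hence `a` is left 3-Engel iff it commutes with every `a ^ (a ^ u)`.
theorem bra_cnj_cnj (a u : G) :
    bra a (cnj a (cnj a u)) = cnj (bra (bra (bra u a) a) a)⁻¹ (a⁻¹ * a⁻¹ * cnj a u * a) := by
  simp only [bra, cnj]; group

theorem LeftThreeEngel.commute_cnj_cnj (ha : LeftThreeEngel a) (u : G) :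
    Commute a (cnj a (cnj a u)) := by
  rw [← bra_eq_one_iff, bra_cnj_cnj, ha u]
  simp only [cnj, inv_one, mul_one, inv_mul_cancel]

theorem LeftThreeEngel.nilClassLe_closure_pair (ha : LeftThreeEngel a) (g : G) :
    NilClassLe (closure {a, cnj a g}) 2 := by
  set b := cnj a g
  have hb : LeftThreeEngel b :=
    ha.of_isConj (isConj_iff.mpr ⟨g⁻¹, by simp only [b, cnj, inv_inv]⟩)
  have hba : cnj b g⁻¹ = a := by simp only [b, cnj, inv_inv]; group
  have hca : Commute (bra a b) a := by
    rw [show bra a b = a⁻¹ * cnj a b by simp [bra, cnj]; group]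
    exact (Commute.refl a).inv_left.mul_left (ha.commute_cnj_cnj g).symm
  have hcb : Commute (bra a b) b := by
    rw [bra_eq_inv_cnj_mul]
    nth_rw 1 [← hba]
    exact (hb.commute_cnj_cnj g⁻¹).symm.inv_left.mul_left (Commute.refl b)
  have hc : bra a b ∈ centralizer {a, b} := by
    rw [mem_centralizer_iff]
    rintro _ (rfl | rfl)
    exacts [hca.symm.eq, hcb.symm.eq]
  refine nilClassLe_closure_two ?_
  rintro x (rfl | rfl) y (rfl | rfl)
  · simp [bra]
  · exact hc
  · rw [← inv_bra]
    exact inv_mem hc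
  · simp [bra]

end LeftThreeEngel

section Nilpotent

variable {G H : Type*} [Group G] [Group H]

theorem exists_finite_subset_of_mem_closure {s : Set G} {x : G} (hx : x ∈ closure s) :
    ∃ t ⊆ s, t.Finite ∧ x ∈ closure t := by
  induction hx using closure_induction with
  | mem x hx => exact ⟨{x}, by simpa using hx, Set.finite_singleton x, subset_closure rfl⟩
  | one => exact ⟨∅, Set.empty_subset _, Set.finite_empty, one_mem _⟩
  | mul x y _ _ ihx ihy =>
    obtain ⟨t, hts, htf, hxt⟩ := ihx
    obtain ⟨u, hus, huf, hyu⟩ := ihy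
    exact ⟨t ∪ u, Set.union_subset hts hus, htf.union huf,
      mul_mem (closure_mono Set.subset_union_left hxt) (closure_mono Set.subset_union_right hyu)⟩
  | inv x _ ih =>
    obtain ⟨t, hts, htf, hxt⟩ := ih
    exact ⟨t, hts, htf, inv_mem hxt⟩

theorem exists_finite_subset_of_subset_closure {s S : Set G} (hS : S.Finite)
    (h : S ⊆ closure s) : ∃ t ⊆ s, t.Finite ∧ S ⊆ closure t := by
  choose! t hts htf hxt using fun x (hx : x ∈ S) => exists_finite_subset_of_mem_closure (h hx)
  exact ⟨⋃ x ∈ S, t x, Set.iUnion₂_subset hts, hS.biUnion htf,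
    fun x hx => closure_mono (Set.subset_biUnion_of_mem hx) (hxt x hx)⟩

theorem isNilpotent_closure_image (f : G →* H) {S : Set G} [Group.IsNilpotent (closure S)] :
    Group.IsNilpotent (closure (f '' S)) := by
  rw [← MonoidHom.map_closure]
  exact Group.nilpotent_of_surjective _ (f.subgroupMap_surjective _)

theorem isNilpotent_closure_of_image {f : G →* H} (hf : Function.Injective f) {S : Set G}
    (h : Group.IsNilpotent (closure (f '' S))) : Group.IsNilpotent (closure S) := by
  rw [← MonoidHom.map_closure] at h
  exact Group.nilpotent_of_mulEquiv ((closure S).equivMapOfInjective f hf).symm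

end Nilpotent

section Radical

theorem LeftThreeEngel.sandwichSet_of_forall_isConj {G : Type*} [Group G] {a : G}
    (ha : LeftThreeEngel a) {K : Subgroup G} {Y : Set K} (hY : ∀ y ∈ Y, IsConj a y) :
    SandwichSet Y := by
  intro p hp q hq g _
  obtain ⟨c, hc⟩ := isConj_iff.mp ((hY p hp).symm.trans (hY q hq))
  apply NilClassLe.of_map_injective K.subtype_injective
  rw [MonoidHom.map_closure, Set.image_pair, map_cnj, coe_subtype, ← hc,
    show cnj (c * p * c⁻¹) g = cnj (p : G) (c⁻¹ * g) by simp only [cnj]; group]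
  exact (ha.of_isConj (hY p hp)).nilClassLe_closure_pair _

theorem LeftThreeEngel.inHPRadical {G : Type} [Group G]
    (hyp : ∀ (K : Type) (_ : Group K) (X : Set K), X.Finite → SandwichSet X →
      closure X = ⊤ → Group.IsNilpotent K)
    {a : G} (ha : LeftThreeEngel a) : InHPRadical a := by
  refine ⟨normalClosure {a}, normalClosure_normal, fun S hSf hSa => ?_, subset_normalClosure rfl⟩
  obtain ⟨D, hDa, hDf, hSD⟩ := exists_finite_subset_of_subset_closure hSf hSa
  have hY : ∀ y ∈ ((↑) : closure D → G) ⁻¹' D, IsConj a y := fun y hy => by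
    obtain ⟨_, rfl, h⟩ := Group.mem_conjugatesOfSet_iff.mp (hDa hy)
    exact h
  have := hyp (closure D) inferInstance _ (hDf.preimage Subtype.val_injective.injOn)
    (ha.sandwichSet_of_forall_isConj hY) closure_closure_coe_preimage
  exact Group.nilpotent_of_mulEquiv (subgroupOfEquivOfLe ((closure_le _).mpr hSD))

end Radical

section Wreath

variable {G : Type*} [Group G] {ι : Type*}

theorem cnj_inl {N K : Type*} [Group N] [Group K] {φ : K →* MulAut N} (n : N)
    (z : N ⋊[φ] K) : cnj (inl n) z = inl ((φ z.right)⁻¹ (cnj n z.left)) := by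
  ext <;> simp [cnj]

theorem cnj_inl_mulAutArrow (b : ι → G) (z : (ι → G) ⋊[mulAutArrow] Equiv.Perm ι) :
    cnj (inl b) z = inl fun i => cnj (b (z.right i)) (z.left (z.right i)) := by
  rw [cnj_inl]
  congr 1

/- The coordinates of `[z, inl b]` are `m i⁻¹ * b i` with `m i` a conjugate of some `b j`, so
`[z, inl b, inl b, inl b]` is computed coordinatewise in the class-2 groups `⟨b i, m i⟩`. -/
theorem leftThreeEngel_inl {b : ι → G}
    (hb : ∀ i j (g : G), NilClassLe (closure {b i, cnj (b j) g}) 2) :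
    LeftThreeEngel (inl b : (ι → G) ⋊[mulAutArrow] Equiv.Perm ι) := by
  intro z
  set m : ι → G := fun i => cnj (b (z.right i)) (z.left (z.right i))
  have hz : bra z (inl b) = inl (m⁻¹ * b) := by
    rw [bra_eq_inv_cnj_mul, cnj_inl_mulAutArrow, ← map_inv, ← map_mul]
  rw [hz, ← map_bra, ← map_bra, ← map_one inl]
  congr 1
  funext i
  change Pi.evalMonoidHom (fun _ => G) i (bra (bra (m⁻¹ * b) b) b) = 1
  have hm : m i ∈ closure {b i, m i} := subset_closure (by simp)
  have hbi : b i ∈ closure {b i, m i} := subset_closure (by simp)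
  simp only [map_bra, map_mul, map_inv, Pi.evalMonoidHom_apply]
  exact (nilClassLe_two_iff _).mp (hb i (z.right i) _) _ (mul_mem (inv_mem hm) hbi) _ hbi _ hbi

theorem isNilpotent_closure_range_of_inl_mem [Finite ι] {b : ι → G}
    {N : Subgroup ((ι → G) ⋊[mulAutArrow] Equiv.Perm ι)} (hN : N.Normal)
    (hNln : LocallyNilpotentSubgroup N) (hb : inl b ∈ N) :
    Group.IsNilpotent (closure (Set.range b)) := by
  classical
  rcases isEmpty_or_nonempty ι with _ | ⟨⟨i⟩⟩
  · rw [Set.range_eq_empty, Subgroup.closure_empty]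
    infer_instance
  set T := Set.range fun σ : Equiv.Perm ι => b ∘ σ
  have hTN : (inl : (ι → G) →* (ι → G) ⋊[mulAutArrow] Equiv.Perm ι) '' T ⊆ N := by
    rintro _ ⟨_, ⟨σ, rfl⟩, rfl⟩
    have h : cnj (inl b) (inr σ) ∈ N := by simpa [cnj] using hN.conj_mem _ hb (inr σ)⁻¹
    rw [cnj_inl_mulAutArrow] at h
    simpa [cnj, Function.comp_def] using h
  have hT := isNilpotent_closure_of_image inl_injective
    (hNln _ ((Set.finite_range _).image _) hTN)
  have hTb : Pi.evalMonoidHom (fun _ => G) i '' T = Set.range b := by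
    ext y
    constructor
    · rintro ⟨_, ⟨σ, rfl⟩, rfl⟩
      exact ⟨σ i, rfl⟩
    · rintro ⟨j, rfl⟩
      exact ⟨_, ⟨Equiv.swap i j, rfl⟩, by simp⟩
  rw [← hTb]
  exact isNilpotent_closure_image _

theorem isNilpotent_of_sandwichSet {G : Type} [Group G]
    (hyp : ∀ (Γ : Type) (_ : Group Γ) (b : Γ), LeftThreeEngel b → InHPRadical b)
    {X : Set G} (hfin : X.Finite) (hX : SandwichSet X) (htop : closure X = ⊤) :
    Group.IsNilpotent G := by
  have : Finite X := hfin.to_subtype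
  have hb : LeftThreeEngel (inl (↑) : (X → G) ⋊[mulAutArrow] Equiv.Perm X) :=
    leftThreeEngel_inl fun i j g => hX i i.2 j j.2 g (htop ▸ mem_top g)
  obtain ⟨N, hN, hNln, hbN⟩ := hyp _ _ _ hb
  have := isNilpotent_closure_range_of_inl_mem hN hNln hbN
  rw [Subtype.range_coe, htop] at this
  exact Group.nilpotent_of_mulEquiv topEquiv

end Wreath

/-- Every left 3-Engel element of every group lies in the Hirsch–Plotkin radical
if and only if every finitely generated sandwich group is nilpotent. -/
theorem stmt18 :
    (∀ (G : Type) (_ : Group G) (a : G), LeftThreeEngel a → InHPRadical a) ↔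
    (∀ (G : Type) (_ : Group G) (X : Set G), X.Finite → SandwichSet X →
      Subgroup.closure X = ⊤ → Group.IsNilpotent G) :=
  ⟨fun hyp _ _ _ hfin hX htop => isNilpotent_of_sandwichSet hyp hfin hX htop,
    fun hyp _ _ _ ha => ha.inHPRadical hyp⟩
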